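/- arXiv:2402.10124 — 2 statements merged into one kernel-verified Lean document; each statement's English description precedes it below -/
import Mathlib

section
/- Suppose Assumption K holds and m_1 ∈ P_1(ℝ^d). For each N, let y_N = (y_{1,N},…,y_{N,N}) ∈ (ℝ^d)^N and set μ_N := (1/N)Σ_{i=1}^N δ_{y_{i,N}}, and suppose μ_N → μ narrowly for some μ ∈ P(ℝ^d). Then for all ε, δ > 0, lim_{N→∞} F_{ε,δ}(μ_N) = F_{ε,δ}(μ). -/
open MeasureTheory Set Filter ENNReal

noncomputable section

/-- Euclidean space ℝ^d. -/
abbrev Euc (d : ℕ) : Type := EuclideanSpace ℝ (Fin d)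

namespace BlobOT

variable {d : ℕ}

/-! ### Probability measures with finite first moment, Wasserstein distance -/

/-- A Borel probability measure on ℝ^d with finite first moment. -/
def IsP1 (μ : Measure (Euc d)) : Prop :=
  IsProbabilityMeasure μ ∧ Integrable (fun x => ‖x‖) μ

/-- Couplings of two measures. -/
def couplings (μ ν : Measure (Euc d)) : Set (Measure (Euc d × Euc d)) :=
  {γ | IsProbabilityMeasure γ ∧ γ.map Prod.fst = μ ∧ γ.map Prod.snd = ν}

/-- The 1-Wasserstein distance. -/
def W1 (μ ν : Measure (Euc d)) : ℝ :=
  sInf ((fun γ => ∫ p, ‖p.1 - p.2‖ ∂γ) '' couplings μ ν)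

/-- A W₁-continuous curve of probability measures with finite first moments,
i.e. an element of C([0,1];P₁(ℝ^d)). -/
def ContCurve (μ : ℝ → Measure (Euc d)) : Prop :=
  (∀ t ∈ Icc (0:ℝ) 1, IsP1 (μ t)) ∧
  ∀ t ∈ Icc (0:ℝ) 1, ∀ ε > 0, ∃ δ > 0, ∀ s ∈ Icc (0:ℝ) 1, |s - t| < δ → W1 (μ s) (μ t) < ε

/-- A W₁-absolutely continuous curve, i.e. an element of AC([0,1];P₁(ℝ^d)). -/
def ACCurve (μ : ℝ → Measure (Euc d)) : Prop :=
  ContCurve μ ∧ ∃ m : ℝ → ℝ, (∀ r, 0 ≤ m r) ∧ IntegrableOn m (Icc (0:ℝ) 1) ∧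
    ∀ s t : ℝ, 0 ≤ s → s ≤ t → t ≤ 1 → W1 (μ s) (μ t) ≤ ∫ r in s..t, m r

/-- Convergence in C([0,1];P₁(ℝ^d)): uniform-in-time W₁ convergence. -/
def TendstoCurves (μn : ℕ → ℝ → Measure (Euc d)) (μ : ℝ → Measure (Euc d)) : Prop :=
  ∀ ε > 0, ∃ N, ∀ n ≥ N, ∀ t ∈ Icc (0:ℝ) 1, W1 (μn n t) (μ t) < ε

/-- Narrow convergence of measures on ℝ^d. -/
def TendstoNarrowly (μn : ℕ → Measure (Euc d)) (μ : Measure (Euc d)) : Prop :=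
  ∀ f : Euc d → ℝ, Continuous f → (∃ C, ∀ x, |f x| ≤ C) →
    Tendsto (fun n => ∫ x, f x ∂(μn n)) atTop (nhds (∫ x, f x ∂μ))

/-! ### Vector measures and their narrow topology -/

/-- Integral of a real function against a signed measure, via Jordan decomposition. -/
def sInt {X : Type} [MeasurableSpace X] (f : X → ℝ) (s : SignedMeasure X) : ℝ :=
  (∫ x, f x ∂s.toJordanDecomposition.posPart) - ∫ x, f x ∂s.toJordanDecomposition.negPart

/-- ℝ^d-valued finite signed Borel measures on ℝ^d × ℝ, encoded componentwise. -/
abbrev VecMeas (d : ℕ) : Type := Fin d → SignedMeasure (Euc d × ℝ)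

/-- Integral ∫ f · dν of a vector field against a vector measure. -/
def vInt (f : Euc d × ℝ → Euc d) (ν : VecMeas d) : ℝ :=
  ∑ i, sInt (fun x => f x i) (ν i)

/-- ν has range in the subspace U and is concentrated on ℝ^d × [0,1]. -/
def VecMeasIn (ν : VecMeas d) (U : Submodule ℝ (Euc d)) : Prop :=
  (∀ A : Set (Euc d × ℝ), MeasurableSet A → (WithLp.toLp 2 (fun i => ν i A : Fin d → ℝ) : Euc d) ∈ U) ∧
  (∀ i, ∀ A : Set (Euc d × ℝ), MeasurableSet A → A ⊆ {p | p.2 ∉ Icc (0:ℝ) 1} → ν i A = 0)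

/-- Narrow convergence of vector measures: convergence in duality with bounded
continuous vector fields. -/
def TendstoVecMeas (νn : ℕ → VecMeas d) (ν : VecMeas d) : Prop :=
  ∀ f : Euc d × ℝ → Euc d, Continuous f → (∃ C, ∀ x, ‖f x‖ ≤ C) →
    Tendsto (fun n => vInt f (νn n)) atTop (nhds (vInt f ν))

/-! ### The continuity equation and cost functionals -/

/-- The measure dμ_t ⊗ dt on ℝ^d × [0,1]. -/
def curveProd (μ : ℝ → Measure (Euc d)) : Measure (Euc d × ℝ) :=
  (volume.restrict (Icc (0:ℝ) 1)).bind (fun t => (μ t).map (fun y => (y, t)))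

/-- Smooth compactly supported test functions on ℝ^d × [0,1]. -/
def TestFun (φ : Euc d × ℝ → ℝ) : Prop := ContDiff ℝ (⊤ : ℕ∞) φ ∧ HasCompactSupport φ

/-- Spatial gradient ∇_y φ. -/
def gradY (φ : Euc d × ℝ → ℝ) (y : Euc d) (t : ℝ) : Euc d := gradient (fun z => φ (z, t)) y

/-- Time derivative ∂_t φ. -/
def dT (φ : Euc d × ℝ → ℝ) (y : Euc d) (t : ℝ) : ℝ := deriv (fun s => φ (y, s)) t

/-- Distributional solution of ∂_t μ_t + ∇·(F(·,μ_t) μ_t) + ∇·ν_t = 0. -/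
def ContinuityEqn (F : Euc d → Measure (Euc d) → Euc d)
    (μ : ℝ → Measure (Euc d)) (ν : VecMeas d) : Prop :=
  ∀ φ : Euc d × ℝ → ℝ, TestFun φ →
    (∫ t in (0:ℝ)..1, ∫ y, (dT φ y t + (inner ℝ (gradY φ y t) (F y (μ t)) : ℝ)) ∂(μ t)) +
      vInt (fun p => gradY φ p.1 p.2) ν = 0

/-- The constraint set C(m₀). -/
def ConstraintSet (F : Euc d → Measure (Euc d) → Euc d) (U : Submodule ℝ (Euc d))
    (m0 : Measure (Euc d)) : Set ((ℝ → Measure (Euc d)) × VecMeas d) :=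
  {p | ACCurve p.1 ∧ VecMeasIn p.2 U ∧ ContinuityEqn F p.1 p.2 ∧ p.1 0 = m0}

/-- dν = u dμ_t ⊗ dt with integrable U-valued density u. -/
def HasDensity (ν : VecMeas d) (μ : ℝ → Measure (Euc d)) (U : Submodule ℝ (Euc d))
    (u : Euc d × ℝ → Euc d) : Prop :=
  Integrable u (curveProd μ) ∧ (∀ x, u x ∈ U) ∧
    ∀ i, ν i = (curveProd μ).withDensityᵥ (fun x => u x i)

/-- The vector measure u dμ_t ⊗ dt. -/
def densVM (μ : ℝ → Measure (Euc d)) (u : Euc d × ℝ → Euc d) : VecMeas d :=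
  fun i => (curveProd μ).withDensityᵥ (fun x => u x i)

/-- The control cost functional Ψ(ν|μ). -/
def Psi (ψ : Euc d → ℝ) (U : Submodule ℝ (Euc d)) (ν : VecMeas d)
    (μ : ℝ → Measure (Euc d)) : ℝ≥0∞ :=
  sInf {c | ∃ u, HasDensity ν μ U u ∧
    c = ∫⁻ x, ENNReal.ofReal (ψ (u x)) ∂(curveProd μ)}

/-- The state and measure cost ∫₀¹ ∫ L(y,μ_t) dμ_t dt. -/
def Lcost (L : Euc d → Measure (Euc d) → ℝ≥0∞) (μ : ℝ → Measure (Euc d)) : ℝ≥0∞ :=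
  ∫⁻ p, L p.1 (μ p.2) ∂(curveProd μ)

/-- The running cost G(μ,ν). -/
def Gfun (ψ : Euc d → ℝ) (U : Submodule ℝ (Euc d)) (L : Euc d → Measure (Euc d) → ℝ≥0∞)
    (μ : ℝ → Measure (Euc d)) (ν : VecMeas d) : ℝ≥0∞ :=
  Psi ψ U ν μ + Lcost L μ

open Classical in
/-- Hard terminal constraint penalization. -/
def Fhard (m1 : Measure (Euc d)) (μ : Measure (Euc d)) : ℝ≥0∞ :=
  if μ = m1 then 0 else ⊤

/-- The objective of problem (MFC). -/
def Efun (ψ : Euc d → ℝ) (U : Submodule ℝ (Euc d)) (L : Euc d → Measure (Euc d) → ℝ≥0∞)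
    (m1 : Measure (Euc d)) (μ : ℝ → Measure (Euc d)) (ν : VecMeas d) : ℝ≥0∞ :=
  Gfun ψ U L μ ν + Fhard m1 (μ 1)

/-- The soft L² terminal penalty F_ε. -/
def Feps (ε : ℝ) (m1r : Euc d → ℝ) (μ : Measure (Euc d)) : ℝ≥0∞ :=
  sInf {c | ∃ ρ : Euc d → ℝ, (∀ y, 0 ≤ ρ y) ∧
    μ = volume.withDensity (fun y => ENNReal.ofReal (ρ y)) ∧ MemLp ρ 2 volume ∧
    c = ENNReal.ofReal (ε⁻¹ * ∫ y, (ρ y - m1r y)^2)}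

/-- The objective of problem (MFC_ε). -/
def Eeps (ε : ℝ) (ψ : Euc d → ℝ) (U : Submodule ℝ (Euc d))
    (L : Euc d → Measure (Euc d) → ℝ≥0∞) (m1r : Euc d → ℝ)
    (μ : ℝ → Measure (Euc d)) (ν : VecMeas d) : ℝ≥0∞ :=
  Gfun ψ U L μ ν + Feps ε m1r (μ 1)

/-! ### Mollifiers and the regularized terminal penalty -/

/-- The rescaled mollifier k_δ(y) = δ^{-d} k(y/δ). -/
def kdel (k : Euc d → ℝ) (δ : ℝ) (y : Euc d) : ℝ := (δ ^ d)⁻¹ * k (δ⁻¹ • y)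

/-- Convolution of a function with a measure. -/
def convM (g : Euc d → ℝ) (μ : Measure (Euc d)) (y : Euc d) : ℝ := ∫ x, g (y - x) ∂μ

/-- Convolution of two functions. -/
def fconv (g h : Euc d → ℝ) (y : Euc d) : ℝ := ∫ z, g (y - z) * h z

/-- The kernel K_δ = k_δ ∗ k_δ. -/
def Kdel (k : Euc d → ℝ) (δ : ℝ) : Euc d → ℝ := fconv (kdel k δ) (kdel k δ)

/-- The regularized terminal penalty F_{ε,δ}(μ) = ε⁻¹ ∫ |k_δ∗μ − k_δ∗m₁|². -/
def Fepsdel (ε δ : ℝ) (k : Euc d → ℝ) (m1 : Measure (Euc d)) (μ : Measure (Euc d)) : ℝ≥0∞ :=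
  ENNReal.ofReal (ε⁻¹ * ∫ y, (convM (kdel k δ) μ y - convM (kdel k δ) m1 y)^2)

/-- The objective of problem (MFC_{ε,δ}). -/
def Eepsdel (ε δ : ℝ) (k : Euc d → ℝ) (ψ : Euc d → ℝ) (U : Submodule ℝ (Euc d))
    (L : Euc d → Measure (Euc d) → ℝ≥0∞) (m1 : Measure (Euc d))
    (μ : ℝ → Measure (Euc d)) (ν : VecMeas d) : ℝ≥0∞ :=
  Gfun ψ U L μ ν + Fepsdel ε δ k m1 (μ 1)

/-! ### Assumptions -/

/-- The moderating function assumption on φ. -/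
structure IsModeratingFunction (φ : ℝ → ℝ) : Prop where
  nonneg : ∀ r ∈ Ici (0:ℝ), 0 ≤ φ r
  strictConvexOn : StrictConvexOn ℝ (Ici 0) φ
  zero : φ 0 = 0
  contDiff : ∃ φ' : ℝ → ℝ, ContinuousOn φ' (Ici 0) ∧
    (∀ r ∈ Ici (0:ℝ), HasDerivWithinAt φ (φ' r) (Ici 0) r) ∧ φ' 0 = 0
  superlinear : Tendsto (fun r => φ r / r) atTop atTop
  doubling : ∃ K > 0, ∀ r ∈ Ici (0:ℝ), φ (2 * r) ≤ K * (1 + φ r)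

/-- Assumption on the control cost ψ, with moderating function φ. -/
structure ControlCost (U : Submodule ℝ (Euc d)) (ψ : Euc d → ℝ) (φ : ℝ → ℝ) : Prop where
  nonneg : ∀ x ∈ U, 0 ≤ ψ x
  convexOn : ConvexOn ℝ (U : Set (Euc d)) ψ
  lsc : LowerSemicontinuousOn ψ (U : Set (Euc d))
  zero : ψ 0 = 0
  mod : IsModeratingFunction φ
  comparison : ∃ C > 0, ∀ x ∈ U, φ ‖x‖ - 1 ≤ ψ x ∧ ψ x ≤ C * (1 + φ ‖x‖)

/-- Case (a): L jointly uniformly continuous and everywhere finite. -/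
def LContinuousCase (L : Euc d → Measure (Euc d) → ℝ≥0∞) : Prop :=
  (∀ y μ, L y μ ≠ ⊤) ∧
  ∀ ε > 0, ∃ δ > 0, ∀ y y' : Euc d, ∀ μ μ' : Measure (Euc d), IsP1 μ → IsP1 μ' →
    ‖y - y'‖ + W1 μ μ' < δ → |(L y μ).toReal - (L y' μ').toReal| < ε

/-- Case (b): L independent of the measure, {L = ∞} open, continuous on {L < ∞}. -/
def LObstacleCase (L : Euc d → Measure (Euc d) → ℝ≥0∞) : Prop :=
  ∃ L0 : Euc d → ℝ≥0∞, (∀ y μ, L y μ = L0 y) ∧ IsOpen {y | L0 y = ⊤} ∧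
    ContinuousOn (fun y => (L0 y).toReal) {y | L0 y ≠ ⊤}

/-- Assumptions on the drift F. -/
structure DriftAssumption (F : Euc d → Measure (Euc d) → Euc d) : Prop where
  unifCont : ∀ ε > 0, ∃ δ > 0, ∀ y y' : Euc d, ∀ μ μ' : Measure (Euc d), IsP1 μ → IsP1 μ' →
    ‖y - y'‖ + W1 μ μ' < δ → ‖F y μ - F y' μ'‖ < ε
  growth : ∃ CF CF' : ℝ, 0 ≤ CF ∧ 0 ≤ CF' ∧ ∀ y μ, IsP1 μ →
    ‖F y μ‖ ≤ CF + CF' * (‖y‖ + ∫ z, ‖z‖ ∂μ)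

/-- Assumption A1 of the paper. `m1r` is the L² density of m₁. -/
structure AssumptionA1 (m0 m1 : Measure (Euc d)) (m1r : Euc d → ℝ)
    (U : Submodule ℝ (Euc d)) (L : Euc d → Measure (Euc d) → ℝ≥0∞)
    (ψ : Euc d → ℝ) (φ : ℝ → ℝ) (F : Euc d → Measure (Euc d) → Euc d) : Prop where
  m0P1 : IsP1 m0
  m1P1 : IsP1 m1
  m1nonneg : ∀ y, 0 ≤ m1r y
  m1density : m1 = volume.withDensity (fun y => ENNReal.ofReal (m1r y))
  m1L2 : MemLp m1r 2 volume
  Lassumption : LContinuousCase L ∨ LObstacleCase L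
  cost : ControlCost U ψ φ
  drift : DriftAssumption F

/-- Assumption K of the paper: the mollifier. -/
structure MollifierAssumption (k : Euc d → ℝ) : Prop where
  cont : Continuous k
  bdd : ∃ C, ∀ x, k x ≤ C
  nonneg : ∀ x, 0 ≤ k x
  even : ∀ x, k (-x) = k x
  moment : Integrable (fun x => ‖x‖ * k x) volume

/-! ### Discrete (particle) problem -/

/-- Empirical measure (1/N) Σ δ_{y_i}. -/
def empMeas {N : ℕ} (y : Fin N → Euc d) : Measure (Euc d) :=
  (N : ℝ≥0∞)⁻¹ • ∑ i, Measure.dirac (y i)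

/-- A map ℝ^d × (ℝ^d)^N → α is symmetric (permutation invariant). -/
def PermInvariant {N : ℕ} {α : Type} (G : Euc d → (Fin N → Euc d) → α) : Prop :=
  ∀ z y (σ : Equiv.Perm (Fin N)), G z (y ∘ σ) = G z y

/-- Convergence of discrete data G_N to continuum data G along W₁-converging
empirical measures, locally uniformly (vector-valued version). -/
def DiscToCont (GN : (N : ℕ) → Euc d → (Fin N → Euc d) → Euc d)
    (G : Euc d → Measure (Euc d) → Euc d) : Prop :=
  ∀ Ns : ℕ → ℕ, Tendsto Ns atTop atTop →
  ∀ (ys : (n : ℕ) → Fin (Ns n) → Euc d) (μ : Measure (Euc d)), IsP1 μ →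
    Tendsto (fun n => W1 (empMeas (ys n)) μ) atTop (nhds 0) →
    ∀ C : Set (Euc d), IsCompact C → ∀ ε > 0, ∃ M, ∀ n ≥ M, ∀ z ∈ C,
      ‖GN (Ns n) z (ys n) - G z μ‖ < ε

/-- Real-valued version of `DiscToCont`. -/
def DiscToContReal (GN : (N : ℕ) → Euc d → (Fin N → Euc d) → ℝ)
    (G : Euc d → Measure (Euc d) → ℝ) : Prop :=
  ∀ Ns : ℕ → ℕ, Tendsto Ns atTop atTop →
  ∀ (ys : (n : ℕ) → Fin (Ns n) → Euc d) (μ : Measure (Euc d)), IsP1 μ →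
    Tendsto (fun n => W1 (empMeas (ys n)) μ) atTop (nhds 0) →
    ∀ C : Set (Euc d), IsCompact C → ∀ ε > 0, ∃ M, ∀ n ≥ M, ∀ z ∈ C,
      |GN (Ns n) z (ys n) - G z μ| < ε

/-- Assumption A3 of the paper: hypotheses on the discrete data L_N, F_N. -/
structure AssumptionA3 (U : Submodule ℝ (Euc d))
    (L : Euc d → Measure (Euc d) → ℝ≥0∞)
    (LN : (N : ℕ) → Euc d → (Fin N → Euc d) → ℝ≥0∞)
    (F : Euc d → Measure (Euc d) → Euc d)
    (FN : (N : ℕ) → Euc d → (Fin N → Euc d) → Euc d) : Prop where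
  Ldata :
    (LContinuousCase L ∧ (∀ N z y, LN N z y ≠ ⊤) ∧
      (∀ N, Continuous fun p : Euc d × (Fin N → Euc d) => (LN N p.1 p.2).toReal) ∧
      (∀ N, PermInvariant (LN N)) ∧
      DiscToContReal (fun N z y => (LN N z y).toReal) (fun z μ => (L z μ).toReal)) ∨
    (LObstacleCase L ∧ (∀ N, PermInvariant (LN N)) ∧
      (∀ N z y y', LN N z y = LN N z y') ∧
      (∀ N, LowerSemicontinuous fun z => LN N z (fun _ => 0)) ∧
      (∀ N z, LN N z (fun _ => 0) ≤ LN (N+1) z (fun _ => 0)) ∧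
      (∀ z (μ : Measure (Euc d)), (⨆ N, LN N z (fun _ => 0)) = L z μ))
  FNcont : ∀ N, Continuous fun p : Euc d × (Fin N → Euc d) => FN N p.1 p.2
  FNsymm : ∀ N, PermInvariant (FN N)
  FNgrowth : ∃ C C' : ℝ, 0 ≤ C ∧ 0 ≤ C' ∧ ∀ N z y, ‖FN N z y‖ ≤ C + C' * (‖z‖ + ‖y‖)
  compat : ∀ N z y μ, IsP1 μ → FN N z y - F z μ ∈ U
  FNconv : DiscToCont FN F

/-- Admissible trajectories/controls for the discrete problem, i.e. (y,u) ∈ A_N(y₀):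
the ODE ẏ_i = F_N(y_i,y) + u_i holds in the Carathéodory (integral) sense. -/
def DiscAdmissible {N : ℕ} (FN : (N : ℕ) → Euc d → (Fin N → Euc d) → Euc d)
    (U : Submodule ℝ (Euc d)) (y0 : Fin N → Euc d)
    (y : ℝ → Fin N → Euc d) (u : ℝ → Fin N → Euc d) : Prop :=
  (∀ i, IntegrableOn (fun t => u t i) (Icc (0:ℝ) 1)) ∧
  (∀ t i, u t i ∈ U) ∧
  (∀ i, IntegrableOn (fun t => FN N (y t i) (y t)) (Icc (0:ℝ) 1)) ∧
  y 0 = y0 ∧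
  (∀ t ∈ Icc (0:ℝ) 1, ∀ i, y t i = y0 i + ∫ s in (0:ℝ)..t, (FN N (y s i) (y s) + u s i))

/-- The nonlocal terminal energy of the discrete problem. -/
def NEdisc (ε δ : ℝ) (k : Euc d → ℝ) (m1 : Measure (Euc d)) {N : ℕ}
    (w : Fin N → Euc d) : ℝ :=
  ε⁻¹ * (((N:ℝ)⁻¹)^2 * ∑ i, ∑ j, Kdel k δ (w i - w j)
    - 2 * (N:ℝ)⁻¹ * ∑ i, convM (Kdel k δ) m1 (w i)
    + ∫ y, convM (Kdel k δ) m1 y ∂m1)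

/-- The discrete objective E_{ε,δ,N}. -/
def DiscEnergy (ε δ : ℝ) (k : Euc d → ℝ) (m1 : Measure (Euc d)) (ψ : Euc d → ℝ)
    (LN : (N : ℕ) → Euc d → (Fin N → Euc d) → ℝ≥0∞) {N : ℕ}
    (y : ℝ → Fin N → Euc d) (u : ℝ → Fin N → Euc d) : ℝ≥0∞ :=
  (N : ℝ≥0∞)⁻¹ * ∑ i, (∫⁻ t in Icc (0:ℝ) 1, ENNReal.ofReal (ψ (u t i))) +
  (N : ℝ≥0∞)⁻¹ * ∑ i, (∫⁻ t in Icc (0:ℝ) 1, LN N (y t i) (y t)) +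
  ENNReal.ofReal (NEdisc ε δ k m1 (y 1))

/-- Convergence of empirical curves along a subsequence s. -/
def DiscCurveConv (s : ℕ → ℕ) (y : (N : ℕ) → ℝ → Fin N → Euc d)
    (μ : ℝ → Measure (Euc d)) : Prop :=
  ∀ ε > 0, ∃ M, ∀ n ≥ M, ∀ t ∈ Icc (0:ℝ) 1, W1 (empMeas (y (s n) t)) (μ t) < ε

/-- Narrow convergence of the discrete momenta (1/N) Σ u_i(t) δ_{y_i(t)} dt along a
subsequence s towards a vector measure ν. -/
def DiscMomConv (s : ℕ → ℕ) (y u : (N : ℕ) → ℝ → Fin N → Euc d) (ν : VecMeas d) : Prop :=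
  ∀ f : Euc d × ℝ → Euc d, Continuous f → (∃ C, ∀ x, ‖f x‖ ≤ C) →
    Tendsto (fun n => ((s n : ℝ))⁻¹ *
        ∑ i, ∫ t in (0:ℝ)..1, (inner ℝ (f (y (s n) t i, t)) (u (s n) t i) : ℝ))
      atTop (nhds (vInt f ν))

/-! ### Feasibility and minimizers -/

/-- A minimization problem is feasible if the objective is finite somewhere on the
constraint set. -/
def Feasible {α : Type} (S : Set α) (E : α → ℝ≥0∞) : Prop := ∃ a ∈ S, E a ≠ ⊤

/-- Minimizer of an objective over a constraint set. -/
def IsMinimizerOn {α : Type} (S : Set α) (E : α → ℝ≥0∞) (a : α) : Prop :=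
  a ∈ S ∧ ∀ b ∈ S, E a ≤ E b

/-- The support of a measure. -/
def measSupp (μ : Measure (Euc d)) : Set (Euc d) :=
  {x | ∀ O : Set (Euc d), IsOpen O → x ∈ O → 0 < μ O}

/-! ### Linear time invariant systems -/

/-- The controllability grammian Γ(T) = ∫₀^T e^{-τA} B Bᵀ e^{-τAᵀ} dτ. -/
def grammian {k' : ℕ} (A : Euc d →L[ℝ] Euc d) (B : EuclideanSpace ℝ (Fin k') →L[ℝ] Euc d)
    (T : ℝ) : Euc d →L[ℝ] Euc d :=
  ∫ τ in (0:ℝ)..T,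
    ((NormedSpace.exp (-(τ • A))).comp
      (B.comp ((ContinuousLinearMap.adjoint B).comp
        (ContinuousLinearMap.adjoint (NormedSpace.exp (-(τ • A)))))))

/-- The controllable linear time invariant hypothesis (case (b) of Theorem 1.9). -/
def LTICase (U : Submodule ℝ (Euc d)) (φ : ℝ → ℝ) (m0 : Measure (Euc d))
    (L : Euc d → Measure (Euc d) → ℝ≥0∞) (LN : (N : ℕ) → Euc d → (Fin N → Euc d) → ℝ≥0∞)
    (F : Euc d → Measure (Euc d) → Euc d)
    (FN : (N : ℕ) → Euc d → (Fin N → Euc d) → Euc d) : Prop :=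
  (∀ y μ, L y μ = 0) ∧ (∀ N z y, LN N z y = 0) ∧
  ∃ A : Euc d →L[ℝ] Euc d, (∀ y μ, F y μ = A y) ∧ (∀ N z y, FN N z y = A z) ∧
  ∃ (k' : ℕ) (B : EuclideanSpace ℝ (Fin k') →L[ℝ] Euc d),
    Function.Injective B ∧
    LinearMap.range (B : EuclideanSpace ℝ (Fin k') →ₗ[ℝ] Euc d) = U ∧
    (∀ T > 0, Function.Bijective (grammian A B T)) ∧
    (∀ η : ℕ → ℝ, (∀ n, 0 < η n) → Tendsto η atTop (nhds 0) →
      ∀ ε > 0, ∃ M, ∀ n ≥ M, ∀ z ∈ measSupp m0,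
        η n * φ ‖(grammian A B (η n)).inverse
          ((ContinuousLinearMap.id ℝ (Euc d) - NormedSpace.exp (-(η n • A))) z)‖ < ε)

/-! ### The original problem (⋆) -/

/-- Admissible pairs for problem (⋆). -/
def StarAdmissible (F : Euc d → Measure (Euc d) → Euc d) (U : Submodule ℝ (Euc d))
    (m0 m1 : Measure (Euc d)) (μ : ℝ → Measure (Euc d)) (u : Euc d × ℝ → Euc d) : Prop :=
  ACCurve μ ∧ (∀ x, u x ∈ U) ∧ Integrable u (curveProd μ) ∧
  (∀ φ : Euc d × ℝ → ℝ, TestFun φ →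
    (∫ t in (0:ℝ)..1, ∫ y,
      (dT φ y t + (inner ℝ (gradY φ y t) (F y (μ t) + u (y, t)) : ℝ)) ∂(μ t)) = 0) ∧
  μ 0 = m0 ∧ μ 1 = m1

/-- Objective of problem (⋆). -/
def StarEnergy (ψ : Euc d → ℝ) (L : Euc d → Measure (Euc d) → ℝ≥0∞)
    (μ : ℝ → Measure (Euc d)) (u : Euc d × ℝ → Euc d) : ℝ≥0∞ :=
  (∫⁻ x, ENNReal.ofReal (ψ (u x)) ∂(curveProd μ)) + Lcost L μ

end BlobOT

open BlobOT

section Statement10Aux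

variable {d : ℕ}

private lemma abs_sub_eq_min (a b : ℝ) : |a - b| = a + b - 2 * min a b := by
  rcases le_total a b with h | h
  · rw [min_eq_left h, abs_of_nonpos (sub_nonpos.2 h)]; ring
  · rw [min_eq_right h, abs_of_nonneg (sub_nonneg.2 h)]; ring

private lemma k_integrable {k : Euc d → ℝ} (hK : MollifierAssumption k) :
    Integrable k (volume : Measure (Euc d)) := by
  obtain ⟨C, hC⟩ := hK.bdd
  have h1 : IntegrableOn k (Metric.closedBall (0 : Euc d) 1) volume :=
    hK.cont.continuousOn.integrableOn_compact (isCompact_closedBall _ _)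
  have h2 : IntegrableOn k (Metric.closedBall (0 : Euc d) 1)ᶜ volume := by
    refine Integrable.mono hK.moment.integrableOn
      (hK.cont.aestronglyMeasurable.restrict) ?_
    refine (ae_restrict_iff' measurableSet_closedBall.compl).2
      (Filter.Eventually.of_forall fun x hx => ?_)
    have hx1 : (1 : ℝ) ≤ ‖x‖ := by
      simp only [Set.mem_compl_iff, Metric.mem_closedBall, dist_zero_right, not_le] at hx
      exact hx.le
    have hk0 := hK.nonneg x
    rw [Real.norm_eq_abs, Real.norm_eq_abs, abs_of_nonneg hk0,
      abs_of_nonneg (mul_nonneg (norm_nonneg _) hk0)]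
    exact le_mul_of_one_le_left hk0 hx1
  have h3 := h1.union h2
  rwa [Set.union_compl_self, integrableOn_univ] at h3

variable {g : Euc d → ℝ} {Cg : ℝ}

private lemma convM_cont (hgc : Continuous g) (hb : ∀ x, ‖g x‖ ≤ Cg)
    (ν : Measure (Euc d)) [IsFiniteMeasure ν] : Continuous (convM g ν) := by
  unfold convM
  refine continuous_of_dominated (bound := fun _ => Cg)
    (fun z => (hgc.comp (continuous_const.sub continuous_id)).aestronglyMeasurable)
    (fun z => Filter.Eventually.of_forall fun x => hb _) (integrable_const _)
    (Filter.Eventually.of_forall fun x => hgc.comp (continuous_id.sub continuous_const))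

private lemma convM_nonneg (hg0 : ∀ x, 0 ≤ g x) (ν : Measure (Euc d)) (z : Euc d) :
    0 ≤ convM g ν z :=
  integral_nonneg fun x => hg0 _

private lemma convM_le (hgc : Continuous g) (hg0 : ∀ x, 0 ≤ g x) (hb : ∀ x, g x ≤ Cg)
    (ν : Measure (Euc d)) [IsFiniteMeasure ν] (hν : ν Set.univ ≤ 1) (z : Euc d) :
    convM g ν z ≤ Cg := by
  have hCg : 0 ≤ Cg := le_trans (hg0 0) (hb 0)
  have hint : Integrable (fun x => g (z - x)) ν := by
    refine Integrable.mono (integrable_const Cg)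
      (hgc.comp (continuous_const.sub continuous_id)).aestronglyMeasurable
      (Filter.Eventually.of_forall fun x => ?_)
    rw [Real.norm_eq_abs, abs_of_nonneg (hg0 _), Real.norm_eq_abs, abs_of_nonneg hCg]
    exact hb _
  have h1 : convM g ν z ≤ ∫ _x, Cg ∂ν :=
    integral_mono hint (integrable_const _) fun x => hb _
  have h2 : (ν Set.univ).toReal ≤ 1 := by
    have := ENNReal.toReal_mono (by simp) hν
    simpa using this
  calc convM g ν z ≤ ∫ _x, Cg ∂ν := h1
    _ = (ν Set.univ).toReal * Cg := by rw [integral_const, smul_eq_mul]; rfl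
    _ ≤ 1 * Cg := mul_le_mul_of_nonneg_right h2 hCg
    _ = Cg := one_mul _

private lemma convM_integrable (hgc : Continuous g) (hgi : Integrable g volume)
    (ν : Measure (Euc d)) [IsFiniteMeasure ν] :
    Integrable (convM g ν) volume ∧
      ∫ z, convM g ν z = (ν Set.univ).toReal * ∫ z, g z := by
  have hmeas : AEStronglyMeasurable (fun p : Euc d × Euc d => g (p.2 - p.1)) (ν.prod volume) :=
    (hgc.comp (continuous_snd.sub continuous_fst)).aestronglyMeasurable
  have hF : Integrable (fun p : Euc d × Euc d => g (p.2 - p.1)) (ν.prod volume) := by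
    rw [integrable_prod_iff hmeas]
    refine ⟨Filter.Eventually.of_forall fun x => hgi.comp_sub_right x, ?_⟩
    have heq : (fun x : Euc d => ∫ z, ‖g (z - x)‖) = fun _ => ∫ z, ‖g z‖ := by
      funext x
      exact integral_sub_right_eq_self (fun z => ‖g z‖) x
    rw [heq]
    exact integrable_const _
  constructor
  · exact hF.integral_prod_right
  · have hswap := integral_integral_swap (f := fun x z => g (z - x)) hF
    calc ∫ z, convM g ν z = ∫ x, (∫ z, g (z - x)) ∂ν := by exact hswap.symm
      _ = ∫ _x, (∫ z, g z) ∂ν := by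
          refine integral_congr_ae (Filter.Eventually.of_forall fun x => ?_)
          exact integral_sub_right_eq_self g x
      _ = (ν Set.univ).toReal * ∫ z, g z := by rw [integral_const, smul_eq_mul]; rfl

private lemma empMeas_univ {N : ℕ} (w : Fin N → Euc d) :
    empMeas w Set.univ = (N : ℝ≥0∞)⁻¹ * N := by
  simp [empMeas]

private lemma empMeas_univ_le {N : ℕ} (w : Fin N → Euc d) : empMeas w Set.univ ≤ 1 := by
  rw [empMeas_univ]
  rcases Nat.eq_zero_or_pos N with h | h
  · subst h; simp
  · rw [ENNReal.inv_mul_cancel (by exact_mod_cast h.ne') (by simp)]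

private lemma empMeas_finite {N : ℕ} (w : Fin N → Euc d) : IsFiniteMeasure (empMeas w) :=
  ⟨lt_of_le_of_lt (empMeas_univ_le w) ENNReal.one_lt_top⟩

private lemma empMeas_univ_eq_one {N : ℕ} (hN : 1 ≤ N) (w : Fin N → Euc d) :
    empMeas w Set.univ = 1 := by
  have hN0 : (N : ℝ≥0∞) ≠ 0 := Nat.cast_ne_zero.mpr (by omega)
  rw [empMeas_univ, ENNReal.inv_mul_cancel hN0 (by simp)]

end Statement10Aux

/-- Lemma 3.5: continuity of `F_{ε,δ}` along narrowly converging
empirical measures. -/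
theorem statement10 {d : ℕ} (k : Euc d → ℝ) (hK : MollifierAssumption k)
    (m1 : Measure (Euc d)) (hm1 : IsP1 m1)
    (y : (N : ℕ) → Fin N → Euc d) (μ : Measure (Euc d)) (hμ : IsProbabilityMeasure μ)
    (hconv : TendstoNarrowly (fun N => empMeas (y N)) μ)
    (ε δ : ℝ) (hε : 0 < ε) (hδ : 0 < δ) :
    Tendsto (fun N => Fepsdel ε δ k m1 (empMeas (y N))) atTop
      (nhds (Fepsdel ε δ k m1 μ)) := by
  haveI := hμ
  haveI := hm1.1
  obtain ⟨C, hC⟩ := hK.bdd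
  have hδd : (0 : ℝ) < δ ^ d := pow_pos hδ d
  set g : Euc d → ℝ := kdel k δ with hgdef
  have hgc : Continuous g :=
    continuous_const.mul (hK.cont.comp (continuous_const_smul _))
  have hg0 : ∀ x, 0 ≤ g x := fun x => mul_nonneg (by positivity) (hK.nonneg _)
  set Cg : ℝ := (δ ^ d)⁻¹ * C with hCgdef
  have hgC : ∀ x, g x ≤ Cg := fun x =>
    mul_le_mul_of_nonneg_left (hC _) (by positivity)
  have hCg0 : 0 ≤ Cg := le_trans (hg0 0) (hgC 0)
  have hgnorm : ∀ x, ‖g x‖ ≤ Cg := fun x => by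
    rw [Real.norm_eq_abs, abs_of_nonneg (hg0 x)]; exact hgC x
  have hgi : Integrable g volume :=
    ((k_integrable hK).comp_smul (inv_ne_zero hδ.ne')).const_mul _
  set b : Euc d → ℝ := convM g m1 with hbdef
  set v : Euc d → ℝ := convM g μ with hvdef
  set u : ℕ → Euc d → ℝ := fun N => convM g (empMeas (y N)) with hudef
  -- continuity
  have hbc : Continuous b := convM_cont hgc hgnorm m1
  have hvc : Continuous v := convM_cont hgc hgnorm μ
  have huc : ∀ N, Continuous (u N) := fun N => by
    haveI := empMeas_finite (y N); exact convM_cont hgc hgnorm _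
  -- nonnegativity and upper bounds
  have hb0 : ∀ z, 0 ≤ b z := convM_nonneg hg0 m1
  have hv0 : ∀ z, 0 ≤ v z := convM_nonneg hg0 μ
  have hu0 : ∀ N z, 0 ≤ u N z := fun N => convM_nonneg hg0 _
  have hbC : ∀ z, b z ≤ Cg := convM_le hgc hg0 hgC m1 (by simp)
  have hvC : ∀ z, v z ≤ Cg := convM_le hgc hg0 hgC μ (by simp)
  have huC : ∀ N z, u N z ≤ Cg := fun N => by
    haveI := empMeas_finite (y N)
    exact convM_le hgc hg0 hgC _ (empMeas_univ_le (y N))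
  -- integrability
  have hbint : Integrable b volume := (convM_integrable hgc hgi m1).1
  have hvint : Integrable v volume := (convM_integrable hgc hgi μ).1
  have huint : ∀ N, Integrable (u N) volume := fun N => by
    haveI := empMeas_finite (y N); exact (convM_integrable hgc hgi _).1
  -- total integrals
  have hIv : ∫ z, v z = ∫ z, g z := by
    rw [(convM_integrable hgc hgi μ).2]; simp
  have hIu : ∀ N, 1 ≤ N → ∫ z, u N z = ∫ z, g z := fun N hN => by
    haveI := empMeas_finite (y N)
    rw [(convM_integrable hgc hgi (empMeas (y N))).2, empMeas_univ_eq_one hN]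
    simp
  -- pointwise convergence from narrow convergence
  have hptw : ∀ z, Tendsto (fun N => u N z) atTop (nhds (v z)) := fun z =>
    hconv (fun x => g (z - x)) (hgc.comp (continuous_const.sub continuous_id))
      ⟨Cg, fun x => by rw [← Real.norm_eq_abs]; exact hgnorm _⟩
  -- Scheffé's lemma : L¹ convergence of u N to v
  have hminmeas : ∀ N, AEStronglyMeasurable (fun z => min (u N z) (v z))
      (volume : Measure (Euc d)) := fun N => ((huc N).min hvc).aestronglyMeasurable
  have hminbd : ∀ N, ∀ᵐ z ∂(volume : Measure (Euc d)),
      ‖min (u N z) (v z)‖ ≤ v z := fun N =>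
    Filter.Eventually.of_forall fun z => by
      rw [Real.norm_eq_abs, abs_of_nonneg (le_min (hu0 N z) (hv0 z))]
      exact min_le_right _ _
  have hminint : ∀ N, Integrable (fun z => min (u N z) (v z)) volume := fun N =>
    hvint.mono (hminmeas N) ((hminbd N).mono fun z hz => hz.trans (le_abs_self _))
  have hmin : Tendsto (fun N => ∫ z, min (u N z) (v z)) atTop (nhds (∫ z, v z)) := by
    refine tendsto_integral_of_dominated_convergence v hminmeas hvint hminbd ?_
    refine Filter.Eventually.of_forall fun z => ?_
    have := (hptw z).min (tendsto_const_nhds (x := v z))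
    simpa [min_self] using this
  have hscheffe : Tendsto (fun N => ∫ z, |u N z - v z|) atTop (nhds 0) := by
    have h0 : Tendsto (fun N => (∫ z, v z) + (∫ z, v z) - 2 * ∫ z, min (u N z) (v z))
        atTop (nhds ((∫ z, v z) + (∫ z, v z) - 2 * ∫ z, v z)) :=
      tendsto_const_nhds.sub (hmin.const_mul 2)
    have h0' : Tendsto (fun N => (∫ z, v z) + (∫ z, v z) - 2 * ∫ z, min (u N z) (v z))
        atTop (nhds 0) := by
      have : (∫ z, v z) + (∫ z, v z) - 2 * ∫ z, v z = 0 := by ring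
      rwa [this] at h0
    refine h0'.congr' ?_
    filter_upwards [Filter.eventually_ge_atTop 1] with N hN1
    have step1 : ∫ z, |u N z - v z| =
        ∫ z, (u N z + v z - 2 * min (u N z) (v z)) :=
      integral_congr_ae (Filter.Eventually.of_forall fun z => abs_sub_eq_min _ _)
    have step2 : ∫ z, (u N z + v z - 2 * min (u N z) (v z)) =
        ((∫ z, u N z) + ∫ z, v z) - 2 * ∫ z, min (u N z) (v z) := by
      have hsum : Integrable (fun z => u N z + v z) volume := (huint N).add hvint
      have hm2 : Integrable (fun z => 2 * min (u N z) (v z)) volume :=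
        (hminint N).const_mul 2
      rw [integral_sub hsum hm2, integral_add (huint N) hvint, integral_const_mul]
    rw [step1, step2, hIu N hN1, hIv]
  -- integrability of the squared differences
  have hsqint : ∀ w : Euc d → ℝ, Continuous w → (∀ z, 0 ≤ w z) → (∀ z, w z ≤ Cg) →
      Integrable w volume → Integrable (fun z => (w z - b z) ^ 2) volume := by
    intro w hwc hw0 hwC hwint
    have hadd : Integrable (fun z => w z + b z) volume := hwint.add hbint
    have hbound : Integrable (fun z => Cg * (w z + b z)) volume := hadd.const_mul Cg
    refine Integrable.mono hbound
      ((hwc.sub hbc).pow 2).aestronglyMeasurable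
      (Filter.Eventually.of_forall fun z => ?_)
    have h1 : |w z - b z| ≤ Cg := by
      rw [abs_le]
      constructor <;> nlinarith [hw0 z, hb0 z, hwC z, hbC z]
    have h2 : |w z - b z| ≤ w z + b z := by
      have := abs_sub (w z) (b z)
      calc |w z - b z| ≤ |w z| + |b z| := abs_sub _ _
        _ = w z + b z := by rw [abs_of_nonneg (hw0 z), abs_of_nonneg (hb0 z)]
    simp only [Real.norm_eq_abs]
    rw [abs_of_nonneg (by positivity : (0:ℝ) ≤ (w z - b z) ^ 2),
      abs_of_nonneg (mul_nonneg hCg0 (add_nonneg (hw0 z) (hb0 z)))]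
    calc (w z - b z) ^ 2 = |w z - b z| * |w z - b z| := by
          rw [← abs_mul, abs_of_nonneg (mul_self_nonneg (w z - b z))]
          ring
      _ ≤ Cg * (w z + b z) := mul_le_mul h1 h2 (abs_nonneg _) hCg0
  have hi2 : Integrable (fun z => (v z - b z) ^ 2) volume := hsqint v hvc hv0 hvC hvint
  -- the key estimate
  have hdiff : ∀ N, |(∫ z, (u N z - b z) ^ 2) - ∫ z, (v z - b z) ^ 2| ≤
      (4 * Cg) * ∫ z, |u N z - v z| := by
    intro N
    have hi1 : Integrable (fun z => (u N z - b z) ^ 2) volume :=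
      hsqint (u N) (huc N) (hu0 N) (huC N) (huint N)
    rw [← integral_sub hi1 hi2]
    have habs := norm_integral_le_integral_norm
      (f := fun z => (u N z - b z) ^ 2 - (v z - b z) ^ 2) (μ := (volume : Measure (Euc d)))
    simp only [Real.norm_eq_abs] at habs
    refine habs.trans ?_
    have hptbd : ∀ z, |(u N z - b z) ^ 2 - (v z - b z) ^ 2| ≤
        (4 * Cg) * |u N z - v z| := by
      intro z
      have hfac : (u N z - b z) ^ 2 - (v z - b z) ^ 2 =
          (u N z - v z) * (u N z + v z - 2 * b z) := by ring
      rw [hfac, abs_mul]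
      have hb1 : |u N z + v z - 2 * b z| ≤ 4 * Cg := by
        rw [abs_le]
        constructor <;> nlinarith [hu0 N z, hv0 z, hb0 z, huC N z, hvC z, hbC z]
      calc |u N z - v z| * |u N z + v z - 2 * b z| ≤ |u N z - v z| * (4 * Cg) :=
            mul_le_mul_of_nonneg_left hb1 (abs_nonneg _)
        _ = (4 * Cg) * |u N z - v z| := by ring
    have hint1 : Integrable (fun z => |(u N z - b z) ^ 2 - (v z - b z) ^ 2|) volume :=
      (hi1.sub hi2).abs
    have hint2 : Integrable (fun z => (4 * Cg) * |u N z - v z|) volume :=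
      (((huint N).sub hvint).abs).const_mul _
    calc ∫ z, |(u N z - b z) ^ 2 - (v z - b z) ^ 2| ≤
          ∫ z, (4 * Cg) * |u N z - v z| := integral_mono hint1 hint2 hptbd
      _ = (4 * Cg) * ∫ z, |u N z - v z| := integral_const_mul _ _
  -- conclude : convergence of the real integrals
  have hItend : Tendsto (fun N => ∫ z, (u N z - b z) ^ 2) atTop
      (nhds (∫ z, (v z - b z) ^ 2)) := by
    rw [tendsto_iff_dist_tendsto_zero]
    refine squeeze_zero (g := fun N => (4 * Cg) * ∫ z, |u N z - v z|) (fun N => dist_nonneg) (fun N => ?_) ?_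
    · rw [Real.dist_eq]; exact hdiff N
    · have := hscheffe.const_mul (4 * Cg)
      simpa using this
  have hfinal : Tendsto (fun N => ENNReal.ofReal (ε⁻¹ * ∫ z, (u N z - b z) ^ 2)) atTop
      (nhds (ENNReal.ofReal (ε⁻¹ * ∫ z, (v z - b z) ^ 2))) :=
    (ENNReal.continuous_ofReal.tendsto _).comp (hItend.const_mul ε⁻¹)
  simpa only [Fepsdel] using hfinal
end
end

section
/- Suppose Assumption K holds and m_1 ∈ P_1(ℝ^d). Then for every μ ∈ P(ℝ^d) and every ε, δ > 0: the function k_δ∗μ − k_δ∗m_1 belongs to L²(ℝ^d), and F_{ε,δ}(μ) := ε⁻¹∫|k_δ∗μ(y) − k_δ∗m_1(y)|²dy = ε⁻¹[∫(K_δ∗μ)dμ − 2∫(K_δ∗m_1)dμ + ∫(K_δ∗m_1)dm_1], where K_δ := k_δ∗k_δ. If moreover ∫k = 1, then F_{ε,δ}(μ) ≤ 2‖k‖_∞/(εδ^d). -/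
open MeasureTheory Set Filter ENNReal

noncomputable section

open BlobOT

section Statement11Aux

namespace Statement11Aux

open MeasureTheory

variable {d : ℕ}

lemma kdel_cont {k : Euc d → ℝ} (hK : MollifierAssumption k) (δ : ℝ) :
    Continuous (kdel k δ) :=
  continuous_const.mul (hK.cont.comp (continuous_const_smul _))

lemma k_le_sup {k : Euc d → ℝ} (hK : MollifierAssumption k) (x : Euc d) :
    k x ≤ ⨆ x, k x := by
  obtain ⟨C, hC⟩ := hK.bdd
  exact le_ciSup ⟨C, by rintro _ ⟨y, rfl⟩; exact hC y⟩ x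

lemma sup_nonneg {k : Euc d → ℝ} (hK : MollifierAssumption k) :
    0 ≤ ⨆ x, k x := le_trans (hK.nonneg 0) (k_le_sup hK 0)

lemma kdel_nonneg {k : Euc d → ℝ} (hK : MollifierAssumption k) {δ : ℝ} (hδ : 0 < δ)
    (y : Euc d) : 0 ≤ kdel k δ y :=
  mul_nonneg (by positivity) (hK.nonneg _)

lemma kdel_le {k : Euc d → ℝ} (hK : MollifierAssumption k) {δ : ℝ} (hδ : 0 < δ)
    (y : Euc d) : kdel k δ y ≤ (δ ^ d)⁻¹ * ⨆ x, k x :=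
  mul_le_mul_of_nonneg_left (k_le_sup hK _) (by positivity)

lemma kdel_even {k : Euc d → ℝ} (hK : MollifierAssumption k) (δ : ℝ) (x y : Euc d) :
    kdel k δ (x - y) = kdel k δ (y - x) := by
  unfold kdel
  rw [show x - y = -(y - x) by abel, smul_neg, hK.even]

lemma k_integrable {k : Euc d → ℝ} (hK : MollifierAssumption k) :
    Integrable k (volume : Measure (Euc d)) := by
  obtain ⟨C, hC⟩ := hK.bdd
  have h1 : Integrable (fun x : Euc d =>
      Set.indicator (Metric.closedBall 0 1) (fun _ => C) x + ‖x‖ * k x) volume := by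
    refine Integrable.add ?_ hK.moment
    refine (integrableOn_const ?_).integrable_indicator
      measurableSet_closedBall
    exact (MeasureTheory.measure_closedBall_lt_top).ne
  refine h1.mono' hK.cont.aestronglyMeasurable ?_
  filter_upwards with x
  rw [Real.norm_of_nonneg (hK.nonneg x)]
  by_cases hx : x ∈ Metric.closedBall (0 : Euc d) 1
  · rw [Set.indicator_of_mem hx]
    have h2 : 0 ≤ ‖x‖ * k x := mul_nonneg (norm_nonneg x) (hK.nonneg x)
    linarith [hC x]
  · rw [Set.indicator_of_notMem hx]
    have h2 : (1 : ℝ) ≤ ‖x‖ := by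
      simp only [Metric.mem_closedBall, dist_zero_right, not_le] at hx
      exact hx.le
    nlinarith [hK.nonneg x]

lemma kdel_integrable {k : Euc d → ℝ} (hK : MollifierAssumption k) {δ : ℝ} (hδ : 0 < δ) :
    Integrable (kdel k δ) (volume : Measure (Euc d)) :=
  ((k_integrable hK).comp_smul (inv_ne_zero hδ.ne')).const_mul _

lemma kdel_integral {k : Euc d → ℝ} (hK : MollifierAssumption k) {δ : ℝ} (hδ : 0 < δ) :
    ∫ y, kdel k δ y = ∫ x, k x := by
  unfold kdel
  rw [MeasureTheory.integral_const_mul,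
    Measure.integral_comp_inv_smul_of_nonneg volume k hδ.le,
    finrank_euclideanSpace_fin, smul_eq_mul]
  have : (δ : ℝ) ^ d ≠ 0 := by positivity
  field_simp

end Statement11Aux

end Statement11Aux

section Statement11Aux2

namespace Statement11Aux

open MeasureTheory

variable {d : ℕ}

lemma convM_smeas {g : Euc d → ℝ} (hg : Continuous g) (ρ : Measure (Euc d)) [SFinite ρ] :
    StronglyMeasurable (convM g ρ) := by
  have h : StronglyMeasurable fun p : Euc d × Euc d => g (p.1 - p.2) :=
    (hg.comp (continuous_fst.sub continuous_snd)).stronglyMeasurable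
  exact h.integral_prod_right'

lemma convM_smeas' {g : Euc d → ℝ} (hg : StronglyMeasurable g) (ρ : Measure (Euc d))
    [SFinite ρ] : StronglyMeasurable (convM g ρ) := by
  have h : StronglyMeasurable fun p : Euc d × Euc d => g (p.1 - p.2) :=
    hg.comp_measurable (measurable_fst.sub measurable_snd)
  exact h.integral_prod_right'

lemma convM_nonneg {g : Euc d → ℝ} (hg : ∀ x, 0 ≤ g x) (ρ : Measure (Euc d)) (y : Euc d) :
    0 ≤ convM g ρ y := integral_nonneg fun x => hg _

lemma slice_integrable {g : Euc d → ℝ} (hg : StronglyMeasurable g) {M : ℝ}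
    (hgM : ∀ x, ‖g x‖ ≤ M) (ρ : Measure (Euc d)) [IsFiniteMeasure ρ] (y : Euc d) :
    Integrable (fun x => g (y - x)) ρ := by
  refine (integrable_const M).mono' ?_ ?_
  · exact (hg.comp_measurable (measurable_const.sub measurable_id)).aestronglyMeasurable
  · filter_upwards with x using hgM _

lemma convM_le {g : Euc d → ℝ} (hg0 : ∀ x, 0 ≤ g x) {M : ℝ}
    (hgM : ∀ x, g x ≤ M) (ρ : Measure (Euc d)) [IsProbabilityMeasure ρ] (y : Euc d) :
    convM g ρ y ≤ M := by
  have := integral_mono_of_nonneg (μ := ρ) (f := fun x => g (y - x)) (g := fun _ => M)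
    (Filter.Eventually.of_forall fun x => hg0 _) (integrable_const M)
    (Filter.Eventually.of_forall fun x => hgM _)
  simpa [measure_univ, convM] using this

lemma convM_ofReal {g : Euc d → ℝ} (hg : StronglyMeasurable g) (hg0 : ∀ x, 0 ≤ g x) {M : ℝ}
    (hgM : ∀ x, ‖g x‖ ≤ M) (ρ : Measure (Euc d)) [IsFiniteMeasure ρ] (y : Euc d) :
    ENNReal.ofReal (convM g ρ y) = ∫⁻ x, ENNReal.ofReal (g (y - x)) ∂ρ :=
  ofReal_integral_eq_lintegral_ofReal (slice_integrable hg hgM ρ y)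
    (Filter.Eventually.of_forall fun x => hg0 _)

end Statement11Aux

end Statement11Aux2

section Statement11Aux3

namespace Statement11Aux

open MeasureTheory

variable {d : ℕ}

lemma Kdel_smeas {k : Euc d → ℝ} (hK : MollifierAssumption k) (δ : ℝ) :
    StronglyMeasurable (Kdel k δ) := by
  have h : StronglyMeasurable fun p : Euc d × Euc d => kdel k δ (p.1 - p.2) * kdel k δ p.2 :=
    (((kdel_cont hK δ).comp (continuous_fst.sub continuous_snd)).mul
      ((kdel_cont hK δ).comp continuous_snd)).stronglyMeasurable
  exact h.integral_prod_right'

lemma Kdel_nonneg {k : Euc d → ℝ} (hK : MollifierAssumption k) {δ : ℝ} (hδ : 0 < δ)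
    (w : Euc d) : 0 ≤ Kdel k δ w :=
  integral_nonneg fun z => mul_nonneg (kdel_nonneg hK hδ _) (kdel_nonneg hK hδ _)

lemma prod_slice_integrable {k : Euc d → ℝ} (hK : MollifierAssumption k) {δ : ℝ}
    (hδ : 0 < δ) (x x' : Euc d) :
    Integrable (fun y => kdel k δ (y - x) * kdel k δ (y - x')) (volume : Measure (Euc d)) := by
  refine Integrable.bdd_mul (c := (δ ^ d)⁻¹ * ⨆ x, k x) (((kdel_integrable hK hδ)).comp_sub_right x') ?_ ?_
  · exact ((kdel_cont hK δ).comp (continuous_id.sub continuous_const)).aestronglyMeasurable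
  · refine Filter.Eventually.of_forall (fun y => ?_)
    rw [Real.norm_of_nonneg (kdel_nonneg hK hδ _)]
    exact kdel_le hK hδ _

lemma Kdel_le {k : Euc d → ℝ} (hK : MollifierAssumption k) {δ : ℝ} (hδ : 0 < δ)
    (w : Euc d) : Kdel k δ w ≤ ((δ ^ d)⁻¹ * ⨆ x, k x) * ∫ x, k x := by
  have hle : ∀ z, kdel k δ (w - z) * kdel k δ z ≤ ((δ ^ d)⁻¹ * ⨆ x, k x) * kdel k δ z :=
    fun z => mul_le_mul_of_nonneg_right (kdel_le hK hδ _) (kdel_nonneg hK hδ _)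
  have h := integral_mono_of_nonneg (μ := (volume : Measure (Euc d)))
    (f := fun z => kdel k δ (w - z) * kdel k δ z)
    (g := fun z => ((δ ^ d)⁻¹ * ⨆ x, k x) * kdel k δ z)
    (Filter.Eventually.of_forall fun z =>
      mul_nonneg (kdel_nonneg hK hδ _) (kdel_nonneg hK hδ _))
    ((kdel_integrable hK hδ).const_mul _)
    (Filter.Eventually.of_forall hle)
  calc Kdel k δ w = ∫ z, kdel k δ (w - z) * kdel k δ z := rfl
    _ ≤ ∫ z, ((δ ^ d)⁻¹ * ⨆ x, k x) * kdel k δ z := h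
    _ = ((δ ^ d)⁻¹ * ⨆ x, k x) * ∫ z, kdel k δ z := integral_const_mul _ _
    _ = _ := by rw [kdel_integral hK hδ]

lemma prod_integral_eq_Kdel {k : Euc d → ℝ} (hK : MollifierAssumption k) {δ : ℝ}
    (hδ : 0 < δ) (x x' : Euc d) :
    ∫ y, kdel k δ (y - x) * kdel k δ (y - x') = Kdel k δ (x - x') := by
  have h := integral_sub_right_eq_self (μ := (volume : Measure (Euc d)))
    (fun z => kdel k δ ((x - x') - z) * kdel k δ z) x'
  calc (∫ y, kdel k δ (y - x) * kdel k δ (y - x'))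
      = ∫ y, kdel k δ ((x - x') - (y - x')) * kdel k δ (y - x') := by
        congr 1; ext y
        rw [sub_sub_sub_cancel_right, kdel_even hK δ x y]
    _ = ∫ z, kdel k δ ((x - x') - z) * kdel k δ z := h
    _ = Kdel k δ (x - x') := rfl

end Statement11Aux

end Statement11Aux3

section Statement11Aux4

namespace Statement11Aux

open MeasureTheory ENNReal

variable {d : ℕ}

lemma convM_Kdel_integrable {k : Euc d → ℝ} (hK : MollifierAssumption k) {δ : ℝ}
    (hδ : 0 < δ) (ρ σ : Measure (Euc d)) [IsProbabilityMeasure ρ] [IsProbabilityMeasure σ] :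
    Integrable (convM (Kdel k δ) σ) ρ := by
  refine (integrable_const (((δ ^ d)⁻¹ * ⨆ x, k x) * ∫ x, k x)).mono'
    ((convM_smeas' (Kdel_smeas hK δ) σ).aestronglyMeasurable) ?_
  filter_upwards with x
  rw [Real.norm_of_nonneg (convM_nonneg (Kdel_nonneg hK hδ) σ x)]
  exact convM_le (Kdel_nonneg hK hδ) (Kdel_le hK hδ) σ x

lemma key {k : Euc d → ℝ} (hK : MollifierAssumption k) {δ : ℝ} (hδ : 0 < δ)
    (ρ σ : Measure (Euc d)) [IsProbabilityMeasure ρ] [IsProbabilityMeasure σ] :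
    Integrable (fun y => convM (kdel k δ) ρ y * convM (kdel k δ) σ y)
      (volume : Measure (Euc d)) ∧
    ∫ y, convM (kdel k δ) ρ y * convM (kdel k δ) σ y = ∫ x, convM (Kdel k δ) σ x ∂ρ := by
  set g := kdel k δ with hg_def
  set M := (δ ^ d)⁻¹ * ⨆ x, k x with hM_def
  have hg0 : ∀ x, 0 ≤ g x := kdel_nonneg hK hδ
  have hgM : ∀ x, ‖g x‖ ≤ M := fun x => by
    rw [Real.norm_of_nonneg (hg0 x)]; exact kdel_le hK hδ x
  have hg_smeas : StronglyMeasurable g := (kdel_cont hK δ).stronglyMeasurable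
  have hGm : Measurable fun p : Euc d × Euc d => ENNReal.ofReal (g (p.1 - p.2)) :=
    ENNReal.measurable_ofReal.comp
      (hg_smeas.measurable.comp (measurable_fst.sub measurable_snd))
  have hGy : ∀ x : Euc d, Measurable fun y : Euc d => ENNReal.ofReal (g (y - x)) :=
    fun x => ENNReal.measurable_ofReal.comp
      (hg_smeas.measurable.comp (measurable_id.sub measurable_const))
  have hGx : ∀ y : Euc d, Measurable fun x : Euc d => ENNReal.ofReal (g (y - x)) :=
    fun y => ENNReal.measurable_ofReal.comp
      (hg_smeas.measurable.comp (measurable_const.sub measurable_id))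
  have hA : ∀ y, ENNReal.ofReal (convM g ρ y) = ∫⁻ x, ENNReal.ofReal (g (y - x)) ∂ρ :=
    convM_ofReal hg_smeas hg0 hgM ρ
  have hB : ∀ y, ENNReal.ofReal (convM g σ y) = ∫⁻ x, ENNReal.ofReal (g (y - x)) ∂σ :=
    convM_ofReal hg_smeas hg0 hgM σ
  have hBm : Measurable fun y : Euc d => ∫⁻ x', ENNReal.ofReal (g (y - x')) ∂σ :=
    hGm.lintegral_prod_right'
  -- the lintegral chain
  have hKM : ∀ w, ‖Kdel k δ w‖ ≤ M * ∫ x, k x := fun w => by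
    rw [Real.norm_of_nonneg (Kdel_nonneg hK hδ w)]; exact Kdel_le hK hδ w
  have chain : (∫⁻ y, (∫⁻ x, ENNReal.ofReal (g (y - x)) ∂ρ) *
      (∫⁻ x', ENNReal.ofReal (g (y - x')) ∂σ)) =
      ENNReal.ofReal (∫ x, convM (Kdel k δ) σ x ∂ρ) := by
    calc (∫⁻ y, (∫⁻ x, ENNReal.ofReal (g (y - x)) ∂ρ) *
        (∫⁻ x', ENNReal.ofReal (g (y - x')) ∂σ))
        = ∫⁻ y, ∫⁻ x, (ENNReal.ofReal (g (y - x)) *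
            ∫⁻ x', ENNReal.ofReal (g (y - x')) ∂σ) ∂ρ := by
          refine lintegral_congr fun y => ?_
          exact (lintegral_mul_const _ (hGx y)).symm
      _ = ∫⁻ x, ∫⁻ y, (ENNReal.ofReal (g (y - x)) *
            ∫⁻ x', ENNReal.ofReal (g (y - x')) ∂σ) ∂volume ∂ρ := by
          refine lintegral_lintegral_swap ?_
          exact (hGm.mul (hBm.comp measurable_fst)).aemeasurable
      _ = ∫⁻ x, ∫⁻ y, ∫⁻ x', (ENNReal.ofReal (g (y - x)) *
            ENNReal.ofReal (g (y - x'))) ∂σ ∂volume ∂ρ := by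
          refine lintegral_congr fun x => lintegral_congr fun y => ?_
          exact (lintegral_const_mul _ (hGx y)).symm
      _ = ∫⁻ x, ∫⁻ x', ∫⁻ y, (ENNReal.ofReal (g (y - x)) *
            ENNReal.ofReal (g (y - x'))) ∂volume ∂σ ∂ρ := by
          refine lintegral_congr fun x => ?_
          refine lintegral_lintegral_swap ?_
          refine Measurable.aemeasurable ?_
          exact (ENNReal.measurable_ofReal.comp (hg_smeas.measurable.comp
            (measurable_fst.sub measurable_const))).mul hGm
      _ = ∫⁻ x, ∫⁻ x', ENNReal.ofReal (Kdel k δ (x - x')) ∂σ ∂ρ := by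
          refine lintegral_congr fun x => lintegral_congr fun x' => ?_
          have h1 : ∀ y, ENNReal.ofReal (g (y - x)) * ENNReal.ofReal (g (y - x')) =
              ENNReal.ofReal (g (y - x) * g (y - x')) :=
            fun y => (ENNReal.ofReal_mul (hg0 _)).symm
          rw [lintegral_congr h1,
            ← ofReal_integral_eq_lintegral_ofReal (prod_slice_integrable hK hδ x x')
              (Filter.Eventually.of_forall fun y => mul_nonneg (hg0 _) (hg0 _)),
            prod_integral_eq_Kdel hK hδ x x']
      _ = ∫⁻ x, ENNReal.ofReal (convM (Kdel k δ) σ x) ∂ρ := by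
          refine lintegral_congr fun x => ?_
          exact (convM_ofReal (Kdel_smeas hK δ) (Kdel_nonneg hK hδ) hKM σ x).symm
      _ = ENNReal.ofReal (∫ x, convM (Kdel k δ) σ x ∂ρ) :=
          (ofReal_integral_eq_lintegral_ofReal (convM_Kdel_integrable hK hδ ρ σ)
            (Filter.Eventually.of_forall fun x => convM_nonneg (Kdel_nonneg hK hδ) σ x)).symm
  have hpt : ∀ y, ENNReal.ofReal (convM g ρ y * convM g σ y) =
      (∫⁻ x, ENNReal.ofReal (g (y - x)) ∂ρ) * (∫⁻ x', ENNReal.ofReal (g (y - x')) ∂σ) := by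
    intro y
    rw [ENNReal.ofReal_mul (convM_nonneg hg0 ρ y), hA y, hB y]
  have hab0 : ∀ y, 0 ≤ convM g ρ y * convM g σ y :=
    fun y => mul_nonneg (convM_nonneg hg0 ρ y) (convM_nonneg hg0 σ y)
  have hab_meas : AEStronglyMeasurable (fun y => convM g ρ y * convM g σ y)
      (volume : Measure (Euc d)) :=
    ((convM_smeas' hg_smeas ρ).mul (convM_smeas' hg_smeas σ)).aestronglyMeasurable
  have hL : (∫⁻ y, ENNReal.ofReal (convM g ρ y * convM g σ y)) =
      ENNReal.ofReal (∫ x, convM (Kdel k δ) σ x ∂ρ) := by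
    rw [lintegral_congr hpt]; exact chain
  have hint : Integrable (fun y => convM g ρ y * convM g σ y) (volume : Measure (Euc d)) := by
    refine ⟨hab_meas, ?_⟩
    rw [hasFiniteIntegral_iff_ofReal (Filter.Eventually.of_forall hab0), hL]
    exact ENNReal.ofReal_lt_top
  refine ⟨hint, ?_⟩
  rw [integral_eq_lintegral_of_nonneg_ae (Filter.Eventually.of_forall hab0) hab_meas, hL,
    ENNReal.toReal_ofReal
      (integral_nonneg fun x => convM_nonneg (Kdel_nonneg hK hδ) σ x)]

end Statement11Aux

end Statement11Aux4

section Statement11Aux5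

namespace Statement11Aux

open MeasureTheory

variable {d : ℕ}

lemma B_nonneg {k : Euc d → ℝ} (hK : MollifierAssumption k) {δ : ℝ} (hδ : 0 < δ)
    (ρ σ : Measure (Euc d)) : 0 ≤ ∫ x, convM (Kdel k δ) σ x ∂ρ :=
  integral_nonneg fun x => convM_nonneg (Kdel_nonneg hK hδ) σ x

lemma B_le {k : Euc d → ℝ} (hK : MollifierAssumption k) {δ : ℝ} (hδ : 0 < δ)
    (ρ σ : Measure (Euc d)) [IsProbabilityMeasure ρ] [IsProbabilityMeasure σ] :
    ∫ x, convM (Kdel k δ) σ x ∂ρ ≤ ((δ ^ d)⁻¹ * ⨆ x, k x) * ∫ x, k x := by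
  have := integral_mono_of_nonneg (μ := ρ) (f := convM (Kdel k δ) σ)
    (g := fun _ => ((δ ^ d)⁻¹ * ⨆ x, k x) * ∫ x, k x)
    (Filter.Eventually.of_forall fun x => convM_nonneg (Kdel_nonneg hK hδ) σ x)
    (integrable_const _)
    (Filter.Eventually.of_forall fun x => convM_le (Kdel_nonneg hK hδ) (Kdel_le hK hδ) σ x)
  simpa [measure_univ] using this

end Statement11Aux

end Statement11Aux5

/-- `k_δ∗μ − k_δ∗m₁ ∈ L²`, the expansion of `F_{ε,δ}`, and the
uniform bound `F_{ε,δ}(μ) ≤ 2‖k‖_∞/(εδ^d)`. -/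
theorem statement11 {d : ℕ} (k : Euc d → ℝ) (hK : MollifierAssumption k)
    (m1 : Measure (Euc d)) (hm1 : IsP1 m1)
    (μ : Measure (Euc d)) (hμ : IsProbabilityMeasure μ)
    (ε δ : ℝ) (hε : 0 < ε) (hδ : 0 < δ) :
    MemLp (fun y => convM (kdel k δ) μ y - convM (kdel k δ) m1 y) 2 volume ∧
    Fepsdel ε δ k m1 μ = ENNReal.ofReal (ε⁻¹ *
      ((∫ y, convM (Kdel k δ) μ y ∂μ) - 2 * (∫ y, convM (Kdel k δ) m1 y ∂μ) +
        ∫ y, convM (Kdel k δ) m1 y ∂m1)) ∧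
    ((∫ x, k x) = 1 →
      Fepsdel ε δ k m1 μ ≤ ENNReal.ofReal (2 * (⨆ x, k x) / (ε * δ ^ d))) := by
  haveI : IsProbabilityMeasure m1 := hm1.1
  obtain ⟨hμμi, hμμ⟩ := Statement11Aux.key hK hδ μ μ
  obtain ⟨hμmi, hμm⟩ := Statement11Aux.key hK hδ μ m1
  obtain ⟨hmmi, hmm⟩ := Statement11Aux.key hK hδ m1 m1
  have hsmeas : StronglyMeasurable (kdel k δ) := (Statement11Aux.kdel_cont hK δ).stronglyMeasurable
  have ha2 : MemLp (convM (kdel k δ) μ) 2 (volume : Measure (Euc d)) := by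
    refine (memLp_two_iff_integrable_sq
      (Statement11Aux.convM_smeas' hsmeas μ).aestronglyMeasurable).2 ?_
    simpa [pow_two] using hμμi
  have hb2 : MemLp (convM (kdel k δ) m1) 2 (volume : Measure (Euc d)) := by
    refine (memLp_two_iff_integrable_sq
      (Statement11Aux.convM_smeas' hsmeas m1).aestronglyMeasurable).2 ?_
    simpa [pow_two] using hmmi
  have hIsq : (∫ y, (convM (kdel k δ) μ y - convM (kdel k δ) m1 y)^2) =
      (∫ y, convM (Kdel k δ) μ y ∂μ) - 2 * (∫ y, convM (Kdel k δ) m1 y ∂μ) +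
        ∫ y, convM (Kdel k δ) m1 y ∂m1 := by
    have hsq : ∀ y, (convM (kdel k δ) μ y - convM (kdel k δ) m1 y)^2 =
        convM (kdel k δ) μ y * convM (kdel k δ) μ y -
          2 * (convM (kdel k δ) μ y * convM (kdel k δ) m1 y) +
          convM (kdel k δ) m1 y * convM (kdel k δ) m1 y := fun y => by ring
    rw [integral_congr_ae (Filter.Eventually.of_forall hsq),
      integral_add
        (f := fun y => convM (kdel k δ) μ y * convM (kdel k δ) μ y -
          2 * (convM (kdel k δ) μ y * convM (kdel k δ) m1 y))
        (g := fun y => convM (kdel k δ) m1 y * convM (kdel k δ) m1 y)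
        (hμμi.sub (hμmi.const_mul 2)) hmmi,
      integral_sub hμμi (hμmi.const_mul 2), MeasureTheory.integral_const_mul, hμμ, hμm, hmm]
  refine ⟨ha2.sub hb2, ?_, ?_⟩
  · unfold Fepsdel
    rw [hIsq]
  · intro hk1
    unfold Fepsdel
    rw [hIsq]
    refine ENNReal.ofReal_le_ofReal ?_
    have h1 := Statement11Aux.B_le hK hδ μ μ
    have h3 := Statement11Aux.B_le hK hδ m1 m1
    have h2 := Statement11Aux.B_nonneg hK hδ μ m1
    rw [hk1, mul_one] at h1 h3
    have hδd : (0:ℝ) < δ ^ d := by positivity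
    have heq : 2 * (⨆ x, k x) / (ε * δ ^ d) =
        ε⁻¹ * (2 * ((δ ^ d)⁻¹ * ⨆ x, k x)) := by
      rw [div_eq_mul_inv, mul_inv]
      ring
    rw [heq]
    refine mul_le_mul_of_nonneg_left ?_ (by positivity)
    linarith
end
end
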